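/- Let n, m be natural numbers and let H_1, …, H_m be affine hyperplanes in ℝ^n, i.e. for each k there is a nonzero linear functional f_k on ℝ^n and a real constant c_k with H_k = {x ∈ ℝ^n | f_k(x) = c_k}. For each subset I of {1, …, m}, let N(I) denote the cardinality of the set of connected components of (⋂_{k ∈ I} H_k) \ (⋃_{k ∉ I} H_k), with the convention that the intersection over the empty set is ℝ^n. Then the total number of extended regions, ∑_{I ⊆ {1,…,m}} N(I), is at most ∑_{p=0}^{n} binom(m, p) · ∑_{i=0}^{n−p} binom(m−p, i). -/

import Mathlib

/-!
Points with the same sign vector `(sign (f k x - c k))ₖ` form a convex cell, and on the set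
`(⋂ k ∈ I, H k) \ (⋃ k ∉ I, H k)`, a union of cells, the sign vector is locally constant. So the
connected components of that set inject into the realizable sign vectors with zero set `I`, and
the total count is at most the number of realizable sign vectors.

For `m` affine functions on an `n`-dimensional space that number is at most
`∑ k ≤ n, C(m, k) 2 ^ k`: adding one more function `b` only affects the cells meeting the hyperplane
`b = 0` (by convexity, a cell missing it lies on one side), each of which splits into at most three
pieces, and those cells are realized by the arrangement restricted to the hyperplane, a space of
dimension `n - 1`. Finally `C(m, p) C(m - p, k - p) = C(m, k) C(k, p)` turns
`∑ k ≤ n, C(m, k) 2 ^ k` into the double sum of the statement.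
-/

open Finset Module Function

def regionBound (n m : ℕ) : ℕ := ∑ k ∈ range (n + 1), m.choose k * 2 ^ k

lemma regionBound_zero_right (n : ℕ) : regionBound n 0 = 1 := by
  simp [regionBound, sum_range_succ']

lemma regionBound_mono_right (n : ℕ) {m m' : ℕ} (h : m ≤ m') :
    regionBound n m ≤ regionBound n m' :=
  sum_le_sum fun k _ => Nat.mul_le_mul_right _ (Nat.choose_le_choose k h)

lemma regionBound_succ_succ (n m : ℕ) :
    regionBound (n + 1) (m + 1) = regionBound (n + 1) m + 2 * regionBound n m := by
  simp only [regionBound, sum_range_succ' _ (n + 1), Nat.choose_succ_succ', add_mul, pow_succ,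
    sum_add_distrib, mul_sum, Nat.choose_zero_right]
  ring_nf

lemma regionBound_eq_sum_choose_mul_sum_choose (n m : ℕ) :
    regionBound n m =
      ∑ p ∈ range (n + 1), m.choose p * ∑ i ∈ range (n - p + 1), (m - p).choose i := by
  calc regionBound n m
      = ∑ k ∈ range (n + 1), ∑ p ∈ range (k + 1), m.choose p * (m - p).choose (k - p) := by
        refine sum_congr rfl fun k _ => ?_
        rw [← Nat.sum_range_choose k, mul_sum]
        exact sum_congr rfl fun p hp => Nat.choose_mul (Nat.lt_succ_iff.1 (mem_range.1 hp))
    _ = ∑ p ∈ range (n + 1), ∑ i ∈ range (n + 1 - p), m.choose p * (m - p).choose i :=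
        sum_range_diag_flip (n + 1) fun p i => m.choose p * (m - p).choose i
    _ = _ := by
        refine sum_congr rfl fun p hp => ?_
        rw [mul_sum, Nat.sub_add_comm (Nat.lt_succ_iff.1 (mem_range.1 hp))]

theorem Set.ncard_add_ncard_le_ncard_image_fst_add {α β : Type*} [Finite α] [Finite β]
    {R : Set (α × β)} {C : Set α} (hC : C ⊆ Prod.fst '' R)
    (hfib : ∀ a b b', (a, b) ∈ R → (a, b') ∈ R → b ≠ b' → a ∈ C) :
    R.ncard + C.ncard ≤ (Prod.fst '' R).ncard + Nat.card β * C.ncard := by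
  have hsplit : R.ncard ≤ (R \ C ×ˢ Set.univ).ncard + (C ×ˢ (Set.univ : Set β)).ncard :=
    (Set.ncard_le_ncard (Set.subset_sdiff_union _ _)).trans (Set.ncard_union_le _ _)
  have hinj : (R \ C ×ˢ Set.univ).ncard ≤ (Prod.fst '' R \ C).ncard := by
    refine Set.ncard_le_ncard_of_injOn Prod.fst
      (fun p hp => ⟨Set.mem_image_of_mem _ hp.1, fun ha => hp.2 ⟨ha, trivial⟩⟩) ?_
    rintro ⟨a, b⟩ ⟨hab, hC⟩ ⟨a', b'⟩ ⟨hab', -⟩ (rfl : a = a')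
    by_contra hne
    exact hC ⟨hfib a b b' hab hab' fun h => hne (h ▸ rfl), trivial⟩
  have hprod : (C ×ˢ (Set.univ : Set β)).ncard = C.ncard * Nat.card β := by
    rw [Set.ncard_prod, Set.ncard_univ]
  have hdiff := Set.ncard_sdiff_add_ncard_of_subset hC
  rw [hprod] at hsplit
  linarith [mul_comm C.ncard (Nat.card β)]

theorem Continuous.connectedComponentsLift_injective {X Y : Type*} [TopologicalSpace X]
    [TopologicalSpace Y] [TotallyDisconnectedSpace Y] {g : X → Y} (hg : Continuous g)
    (hfib : ∀ y, IsPreconnected (g ⁻¹' {y})) : Injective hg.connectedComponentsLift := by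
  intro p q hpq
  obtain ⟨x, rfl⟩ := ConnectedComponents.surjective_coe p
  obtain ⟨y, rfl⟩ := ConnectedComponents.surjective_coe q
  simp only [Continuous.connectedComponentsLift_apply_coe] at hpq
  exact ConnectedComponents.coe_eq_coe'.2
    ((hfib (g y)).subset_connectedComponent rfl hpq)

lemma convex_setOf_sign_eq {𝕜 : Type*} [Field 𝕜] [LinearOrder 𝕜] [IsStrictOrderedRing 𝕜]
    (s : SignType) : Convex 𝕜 {r : 𝕜 | SignType.sign r = s} := by
  obtain rfl | rfl | rfl := s.trichotomy
  · rw [show {r : 𝕜 | SignType.sign r = -1} = Set.Iio 0 from Set.ext fun r => sign_eq_neg_one_iff]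
    exact convex_Iio 0
  · rw [show {r : 𝕜 | SignType.sign r = 0} = {0} from Set.ext fun r => sign_eq_zero_iff]
    exact convex_singleton 0
  · rw [show {r : 𝕜 | SignType.sign r = 1} = Set.Ioi 0 from Set.ext fun r => sign_eq_one_iff]
    exact convex_Ioi 0

section AffineFunctional

variable {𝕜 V : Type*} [Field 𝕜] [AddCommGroup V] [Module 𝕜 V]

lemma exists_affineMap_ker_setOf_eq_zero_subset_range (b : V →ᵃ[𝕜] 𝕜) (hb : b.linear ≠ 0) :
    ∃ e : LinearMap.ker b.linear →ᵃ[𝕜] V, {x | b x = 0} ⊆ Set.range e := by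
  obtain ⟨x₀, hx₀⟩ := (b.linear_surjective_iff.1
    (LinearMap.range_eq_top.1 (Module.Dual.range_eq_top_of_ne_zero hb))) 0
  refine ⟨⟨fun v => (v : V) + x₀, (LinearMap.ker b.linear).subtype,
    fun p v => add_assoc (v : V) p x₀⟩, fun z hz => ?_⟩
  refine ⟨⟨z - x₀, ?_⟩, sub_add_cancel z x₀⟩
  rw [LinearMap.mem_ker, ← vsub_eq_sub, b.linearMap_vsub, hz, hx₀, vsub_self]

end AffineFunctional

section SignVector

variable {𝕜 V ι : Type*} [Field 𝕜] [LinearOrder 𝕜] [AddCommGroup V] [Module 𝕜 V]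

def signVector (a : ι → V →ᵃ[𝕜] 𝕜) (x : V) : ι → SignType := fun k => SignType.sign (a k x)

lemma signVector_snoc {m : ℕ} (a : Fin m → V →ᵃ[𝕜] 𝕜) (b : V →ᵃ[𝕜] 𝕜) (x : V) :
    signVector (Fin.snoc a b : Fin (m + 1) → V →ᵃ[𝕜] 𝕜) x =
      Fin.snoc (signVector a x) (SignType.sign (b x)) := by
  funext k
  induction k using Fin.lastCases <;> simp [signVector]

lemma ncard_range_signVector_snoc_add_le {m : ℕ} (a : Fin m → V →ᵃ[𝕜] 𝕜) (b : V →ᵃ[𝕜] 𝕜)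
    {C : Set (Fin m → SignType)} (hC : C ⊆ Set.range (signVector a))
    (hcross : ∀ x y, signVector a x = signVector a y →
      SignType.sign (b x) ≠ SignType.sign (b y) → signVector a x ∈ C) :
    (Set.range (signVector (Fin.snoc a b : Fin (m + 1) → V →ᵃ[𝕜] 𝕜))).ncard + C.ncard ≤
      (Set.range (signVector a)).ncard + 3 * C.ncard := by
  set R := Set.range fun x => (signVector a x, SignType.sign (b x))
  have hrange : Set.range (signVector (Fin.snoc a b : Fin (m + 1) → V →ᵃ[𝕜] 𝕜)) =
      (fun p => Fin.snoc p.1 p.2) '' R := by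
    rw [← Set.range_comp]
    exact congrArg Set.range (funext (signVector_snoc a b))
  have hfst : Prod.fst '' R = Set.range (signVector a) := by
    rw [← Set.range_comp]
    rfl
  have hpairs : R.ncard + C.ncard ≤ (Prod.fst '' R).ncard + Nat.card SignType * C.ncard := by
    refine Set.ncard_add_ncard_le_ncard_image_fst_add (hfst ▸ hC) ?_
    rintro _ _ _ ⟨x, hx⟩ ⟨y, hy⟩ hne
    simp only [Prod.mk.injEq] at hx hy
    rw [← hx.1]
    exact hcross x y (hx.1.trans hy.1.symm) (hx.2.trans_ne (hne.trans_eq hy.2.symm))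
  rw [hrange]
  rw [hfst, show Nat.card SignType = 3 by rw [Nat.card_eq_fintype_card]; rfl] at hpairs
  linarith [Set.ncard_image_le (s := R)
    (f := fun p => (Fin.snoc p.1 p.2 : Fin (m + 1) → SignType))]

variable [IsStrictOrderedRing 𝕜]

lemma convex_setOf_signVector_eq (a : ι → V →ᵃ[𝕜] 𝕜) (τ : ι → SignType) :
    Convex 𝕜 {x | signVector a x = τ} := by
  simp only [funext_iff, Set.ofPred_forall]
  exact convex_iInter fun k => (convex_setOf_sign_eq (τ k)).affine_preimage (a k)

lemma exists_signVector_eq_of_sign_ne (a : ι → V →ᵃ[𝕜] 𝕜) (b : V →ᵃ[𝕜] 𝕜) {x y : V}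
    (hxy : signVector a x = signVector a y) (hb : SignType.sign (b x) ≠ SignType.sign (b y)) :
    ∃ z, signVector a z = signVector a x ∧ b z = 0 := by
  by_cases hx : b x = 0
  · exact ⟨x, rfl, hx⟩
  by_cases hy : b y = 0
  · exact ⟨y, hxy.symm, hy⟩
  -- `b x` and `b y` have opposite signs, so `b` vanishes on the segment at `t = b x / (b x - b y)`
  have hopp : (0 < b x ∧ b y < 0) ∨ (b x < 0 ∧ 0 < b y) := by
    rcases lt_or_gt_of_ne hx with hx | hx <;> rcases lt_or_gt_of_ne hy with hy | hy <;>
      simp_all [sign_neg, sign_pos]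
  have hden : b x - b y ≠ 0 := by rcases hopp with h | h <;> linarith [h.1, h.2]
  set t := b x / (b x - b y)
  have ht : t ∈ Set.Icc (0 : 𝕜) 1 := by
    rcases hopp with ⟨h₁, h₂⟩ | ⟨h₁, h₂⟩
    · exact ⟨div_nonneg h₁.le (by linarith), (div_le_one (by linarith)).2 (by linarith)⟩
    · exact ⟨div_nonneg_of_nonpos h₁.le (by linarith),
        (div_le_one_of_neg (by linarith)).2 (by linarith)⟩
  refine ⟨AffineMap.lineMap x y t,
    (convex_setOf_signVector_eq a _).lineMap_mem rfl hxy.symm ht, ?_⟩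
  rw [AffineMap.apply_lineMap, AffineMap.lineMap_apply_ring', ← neg_sub, mul_neg,
    div_mul_cancel₀ _ hden, neg_add_cancel]

theorem ncard_range_signVector_le {m : ℕ} [FiniteDimensional 𝕜 V] (a : Fin m → V →ᵃ[𝕜] 𝕜) :
    (Set.range (signVector a)).ncard ≤ regionBound (finrank 𝕜 V) m := by
  induction m generalizing V with
  | zero =>
    simpa [regionBound_zero_right] using Set.ncard_le_one_of_subsingleton (Set.range (signVector a))
  | succ m ih =>
    obtain ⟨a, b, rfl⟩ : ∃ a' b, a = Fin.snoc a' b :=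
      ⟨Fin.init a, a (Fin.last m), (Fin.snoc_init_self a).symm⟩
    by_cases hb : b.linear = 0
    · have hconst : ∀ x y, b x = b y := fun x y => by
        rw [← vsub_eq_zero_iff_eq, ← b.linearMap_vsub, hb, LinearMap.zero_apply]
      have hstep := ncard_range_signVector_snoc_add_le a b (Set.empty_subset _)
        fun x y _ hne => absurd (congrArg _ (hconst x y)) hne
      rw [Set.ncard_empty] at hstep
      exact hstep.trans ((ih a).trans (regionBound_mono_right _ m.le_succ))
    · obtain ⟨e, he⟩ := exists_affineMap_ker_setOf_eq_zero_subset_range b hb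
      have hcross : (signVector a '' {x | b x = 0}).ncard ≤
          regionBound (finrank 𝕜 (LinearMap.ker b.linear)) m := by
        refine (Set.ncard_le_ncard ?_).trans (ih fun k => (a k).comp e)
        rintro _ ⟨z, hz, rfl⟩
        obtain ⟨v, rfl⟩ := he hz
        exact ⟨v, rfl⟩
      have hstep := ncard_range_signVector_snoc_add_le a b
        (C := signVector a '' {x | b x = 0}) (Set.image_subset_range _ _)
        fun x y hxy hne => by
          obtain ⟨z, hz, hz₀⟩ := exists_signVector_eq_of_sign_ne a b hxy hne
          exact ⟨z, hz₀, hz⟩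
      have hdeletion := ih a
      rw [← Module.Dual.finrank_ker_add_one_of_ne_zero hb, regionBound_succ_succ] at *
      linarith

end SignVector

section Stratum

variable {V ι : Type*} [AddCommGroup V] [Module ℝ V] [Fintype ι]

def zeroIndices (τ : ι → SignType) : Finset ι := univ.filter fun k => τ k = 0

def stratum (a : ι → V →ᵃ[ℝ] ℝ) (I : Finset ι) : Set V := {x | zeroIndices (signVector a x) = I}

lemma mem_stratum {a : ι → V →ᵃ[ℝ] ℝ} {I : Finset ι} {x : V} :
    x ∈ stratum a I ↔ ∀ k, a k x = 0 ↔ k ∈ I := by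
  simp [stratum, zeroIndices, Finset.ext_iff, signVector]

variable [TopologicalSpace V]

lemma continuous_signVector_stratum {a : ι → V →ᵃ[ℝ] ℝ} (ha : ∀ k, Continuous (a k))
    (I : Finset ι) : Continuous fun x : stratum a I => signVector a x := by
  refine continuous_pi fun k => ?_
  by_cases hk : k ∈ I
  · refine (continuous_const (y := (0 : SignType))).congr fun x => ?_
    simp [signVector, (mem_stratum.1 x.2 k).2 hk]
  · refine continuous_iff_continuousAt.2 fun x => ?_
    exact (continuousAt_sign_of_ne_zero fun h => hk ((mem_stratum.1 x.2 k).1 h)).comp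
      (f := a k ∘ Subtype.val) ((ha k).comp continuous_subtype_val).continuousAt

variable [IsTopologicalAddGroup V] [ContinuousSMul ℝ V]

theorem nonempty_connectedComponents_stratum_embedding (a : ι → V →ᵃ[ℝ] ℝ)
    (ha : ∀ k, Continuous (a k)) (I : Finset ι) :
    Nonempty (ConnectedComponents (stratum a I) ↪
      {τ : Set.range (signVector a) // zeroIndices τ.1 = I}) := by
  set g : stratum a I → {τ : Set.range (signVector a) // zeroIndices τ.1 = I} :=
    fun x => ⟨⟨signVector a x, x, rfl⟩, x.2⟩
  have hg : Continuous g := ((continuous_signVector_stratum ha I).subtype_mk _).subtype_mk _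
  refine ⟨⟨hg.connectedComponentsLift, hg.connectedComponentsLift_injective ?_⟩⟩
  rintro ⟨⟨τ, hτ⟩, hτI⟩
  have hfib : g ⁻¹' {⟨⟨τ, hτ⟩, hτI⟩} = Subtype.val ⁻¹' {x | signVector a x = τ} := by
    ext x
    simp [g, Subtype.ext_iff]
  have hcell : {x | signVector a x = τ} ⊆ stratum a I := fun x (hx : signVector a x = τ) => by
    rw [stratum, Set.mem_ofPred_eq, hx]
    exact hτI
  rw [hfib, ← Topology.IsInducing.subtypeVal.isPreconnected_image,
    Subtype.image_preimage_coe, Set.inter_eq_right.2 hcell]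
  exact (convex_setOf_signVector_eq a τ).isPreconnected

end Stratum

theorem extended_regions_card_le_general
    (n m : ℕ)
    (f : Fin m → ((Fin n → ℝ) →ₗ[ℝ] ℝ))
    (c : Fin m → ℝ) :
    (∀ I : Finset (Fin m), Finite (ConnectedComponents
      ↥((⋂ k ∈ I, {x : Fin n → ℝ | f k x = c k}) \
        (⋃ k ∈ Iᶜ, {x : Fin n → ℝ | f k x = c k})))) ∧
    ∑ I : Finset (Fin m),
      Nat.card (ConnectedComponents
        ↥((⋂ k ∈ I, {x : Fin n → ℝ | f k x = c k}) \
          (⋃ k ∈ Iᶜ, {x : Fin n → ℝ | f k x = c k})))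
      ≤ ∑ p ∈ Finset.range (n + 1),
          Nat.choose m p *
            ∑ i ∈ Finset.range (n - p + 1), Nat.choose (m - p) i := by
  set a : Fin m → (Fin n → ℝ) →ᵃ[ℝ] ℝ := fun k => (f k).toAffineMap - AffineMap.const ℝ _ (c k)
  have ha : ∀ k, Continuous (a k) := fun k =>
    (f k).continuous_of_finiteDimensional.sub continuous_const
  have hregion : ∀ I : Finset (Fin m), (⋂ k ∈ I, {x : Fin n → ℝ | f k x = c k}) \
      (⋃ k ∈ Iᶜ, {x : Fin n → ℝ | f k x = c k}) = stratum a I := fun I => by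
    ext x
    simp only [mem_stratum, a, AffineMap.coe_sub, Pi.sub_apply, LinearMap.coe_toAffineMap,
      AffineMap.const_apply, sub_eq_zero, Set.mem_sdiff, Set.mem_iInter, Set.mem_iUnion,
      Set.mem_ofPred_eq, mem_compl, exists_prop, not_exists, not_and]
    exact ⟨fun h k => ⟨fun hk => by_contra fun hkI => h.2 k hkI hk, h.1 k⟩,
      fun h => ⟨fun k => (h k).2, fun k hkI hk => hkI ((h k).1 hk)⟩⟩
  have hemb : ∀ I : Finset (Fin m), Nonempty (ConnectedComponents
      ↥((⋂ k ∈ I, {x : Fin n → ℝ | f k x = c k}) \ (⋃ k ∈ Iᶜ, {x : Fin n → ℝ | f k x = c k})) ↪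
        {τ : Set.range (signVector a) // zeroIndices τ.1 = I}) := fun I =>
    hregion I ▸ nonempty_connectedComponents_stratum_embedding a ha I
  have φ := fun I => (hemb I).some
  refine ⟨fun I => Finite.of_injective _ (φ I).injective, ?_⟩
  calc _
      ≤ ∑ I, Nat.card {τ : Set.range (signVector a) // zeroIndices τ.1 = I} :=
        sum_le_sum fun I _ => Nat.card_le_card_of_injective _ (φ I).injective
    _ = (Set.range (signVector a)).ncard := by
        rw [← Nat.card_sigma, Nat.card_congr (Equiv.sigmaFiberEquiv _), Nat.card_coe_set_eq]
    _ ≤ regionBound (finrank ℝ (Fin n → ℝ)) m := ncard_range_signVector_le a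
    _ = _ := by rw [finrank_fin_fun, regionBound_eq_sum_choose_mul_sum_choose]

/-- The total number of extended regions defined by a finite family of
affine hyperplanes in ℝ^n is bounded by
∑_{p=0}^{n} binom(m,p) · ∑_{i=0}^{n−p} binom(m−p,i). -/
theorem extended_regions_card_le
    (n m : ℕ)
    (f : Fin m → ((Fin n → ℝ) →ₗ[ℝ] ℝ))
    (hf : ∀ k, f k ≠ 0)
    (c : Fin m → ℝ) :
    (∀ I : Finset (Fin m), Finite (ConnectedComponents
      ↥((⋂ k ∈ I, {x : Fin n → ℝ | f k x = c k}) \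
        (⋃ k ∈ Iᶜ, {x : Fin n → ℝ | f k x = c k})))) ∧
    ∑ I : Finset (Fin m),
      Nat.card (ConnectedComponents
        ↥((⋂ k ∈ I, {x : Fin n → ℝ | f k x = c k}) \
          (⋃ k ∈ Iᶜ, {x : Fin n → ℝ | f k x = c k})))
      ≤ ∑ p ∈ Finset.range (n + 1),
          Nat.choose m p *
            ∑ i ∈ Finset.range (n - p + 1), Nat.choose (m - p) i :=
  extended_regions_card_le_general n m f c
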